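/- Main proposition (extended detector): Under the same hypotheses (ρ, j C^1, ρ > 0, continuity equation, complete flow, normalized ρ(0,·)), let a < b, D = {(t,x) : x ∈ [a,b], t ≥ 0}, D_τ = {p ∈ D : t(p) ≤ τ}, f_a(s) = ∫_0^s j(t,a)dt, f_b(s) = ∫_0^s j(t,b)dt. Then for all τ ≥ 0: P(τ) = P(0) + max{f_a(s) : 0 ≤ s ≤ τ} + max{−f_b(s) : 0 ≤ s ≤ τ}, where P(0) = ∫_a^b ρ(0,ξ)dξ. -/

import Mathlib

/-!
By the continuity equation the 1-form `ρ dx - j dt` is closed, so it has a primitive `ψ`, and `ψ`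
is constant along the Bohmian trajectories (velocity `j / ρ`). Hence `ψ (0, 𝒳₀ (s, c)) = ψ (s, c)`,
and subtracting both sides from `ψ (0, c)` shows that the `ρ(0, ·)`-mass between `𝒳₀ (s, c)` and `c`
is the flux `∫₀ˢ j(t, c) dt` through the line `x = c`. Trajectories do not cross, so `𝒳₀ (D_τ)` is
the interval from the lowest footpoint on the edge `x = a` to the highest one on the edge `x = b`;
by the flux identity these extreme footpoints occur where `f_a` and `-f_b` are maximal on `[0, τ]`.
-/

open Set MeasureTheory intervalIntegral

section PartialDerivatives

variable {E : Type*} [NormedAddCommGroup E] [NormedSpace ℝ E] {f : ℝ × ℝ → E}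

theorem Differentiable.hasDerivAt_comp_prodMk_left (hf : Differentiable ℝ f) (t y : ℝ) :
    HasDerivAt (fun t => f (t, y)) (fderiv ℝ f (t, y) (1, 0)) t :=
  (hf (t, y)).hasFDerivAt.comp_hasDerivAt t ((hasDerivAt_id t).prodMk (hasDerivAt_const t y))

theorem Differentiable.hasDerivAt_comp_prodMk_right (hf : Differentiable ℝ f) (t y : ℝ) :
    HasDerivAt (fun y => f (t, y)) (fderiv ℝ f (t, y) (0, 1)) y :=
  (hf (t, y)).hasFDerivAt.comp_hasDerivAt y ((hasDerivAt_const y t).prodMk (hasDerivAt_id y))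

theorem hasDerivAt_intervalIntegral_of_contDiff [CompleteSpace E] (hf : ContDiff ℝ 1 f)
    (a b t₀ : ℝ) :
    HasDerivAt (fun t => ∫ y in a..b, f (t, y)) (∫ y in a..b, fderiv ℝ f (t₀, y) (1, 0)) t₀ := by
  have hf' : Continuous fun p => fderiv ℝ f p (1, 0) :=
    (hf.continuous_fderiv one_ne_zero).clm_apply continuous_const
  obtain ⟨C, hC⟩ := ((isCompact_closedBall t₀ 1).prod (isCompact_uIcc (a := a) (b := b))
    ).exists_bound_of_continuousOn hf'.continuousOn
  refine (hasDerivAt_integral_of_dominated_loc_of_deriv_le (F := fun t y => f (t, y))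
      (F' := fun t y => fderiv ℝ f (t, y) (1, 0)) (bound := fun _ => C)
      (Metric.ball_mem_nhds t₀ one_pos) ?_ ?_ ?_ ?_ (intervalIntegrable_const (μ := volume)) ?_).2
  · exact .of_forall fun t =>
      (hf.continuous.comp (Continuous.prodMk_right t)).aestronglyMeasurable
  · exact (hf.continuous.comp (Continuous.prodMk_right t₀)).intervalIntegrable _ _
  · exact (hf'.comp (Continuous.prodMk_right t₀)).aestronglyMeasurable
  · exact .of_forall fun y hy t ht =>
      hC _ ⟨Metric.ball_subset_closedBall ht, uIoc_subset_uIcc hy⟩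
  · exact .of_forall fun y _ t _ =>
      (hf.differentiable one_ne_zero).hasDerivAt_comp_prodMk_left t y

end PartialDerivatives

theorem strictAnti_intervalIntegral_left {f : ℝ → ℝ} (hf : Continuous f) (hpos : ∀ x, 0 < f x)
    (b : ℝ) : StrictAnti fun a => ∫ x in a..b, f x := by
  intro a₁ a₂ h
  dsimp only
  rw [← integral_add_adjacent_intervals (hf.intervalIntegrable a₁ a₂) (hf.intervalIntegrable a₂ b)]
  linarith [intervalIntegral_pos_of_pos (hf.intervalIntegrable a₁ a₂) hpos h]

theorem IsMaxOn.csSup_image_eq {α β : Type*} [ConditionallyCompleteLattice β] {f : α → β}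
    {s : Set α} {a : α} (h : IsMaxOn f s a) (ha : a ∈ s) : sSup (f '' s) = f a :=
  IsGreatest.csSup_eq ⟨mem_image_of_mem f ha, forall_mem_image.2 h⟩

noncomputable def streamFunction (ρ j : ℝ × ℝ → ℝ) (p : ℝ × ℝ) : ℝ :=
  (∫ η in (0:ℝ)..p.2, ρ (p.1, η)) - ∫ u in (0:ℝ)..p.1, j (u, 0)

section StreamFunction

variable {ρ j : ℝ × ℝ → ℝ}

theorem hasDerivAt_streamFunction_snd (hρ : Continuous ρ) (t y : ℝ) :
    HasDerivAt (fun y => streamFunction ρ j (t, y)) (ρ (t, y)) y :=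
  ((hρ.comp (Continuous.prodMk_right t)).integral_hasStrictDerivAt 0 y).hasDerivAt.sub_const
    (∫ u in (0:ℝ)..t, j (u, 0))

theorem hasDerivAt_streamFunction_fst (hρ : ContDiff ℝ 1 ρ) (hj : ContDiff ℝ 1 j)
    (hcont : ∀ p : ℝ × ℝ, fderiv ℝ ρ p (1, 0) + fderiv ℝ j p (0, 1) = 0) (t y : ℝ) :
    HasDerivAt (fun t => streamFunction ρ j (t, y)) (-j (t, y)) t := by
  have hj' : Continuous fun η => fderiv ℝ j (t, η) (0, 1) :=
    ((hj.continuous_fderiv one_ne_zero).clm_apply continuous_const).comp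
      (Continuous.prodMk_right t)
  have hflux : ∫ η in (0:ℝ)..y, fderiv ℝ ρ (t, η) (1, 0) = -(j (t, y) - j (t, 0)) := by
    rw [← integral_eq_sub_of_hasDerivAt
      (fun η _ => (hj.differentiable one_ne_zero).hasDerivAt_comp_prodMk_right t η)
      (hj'.intervalIntegrable _ _), ← intervalIntegral.integral_neg]
    exact integral_congr fun η _ => eq_neg_of_add_eq_zero_left (hcont (t, η))
  refine ((hasDerivAt_intervalIntegral_of_contDiff hρ 0 y t).sub
    ((hj.continuous.comp (Continuous.prodMk_left 0)).integral_hasStrictDerivAt 0 t).hasDerivAt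
    ).congr_deriv ?_
  rw [hflux, Function.comp_apply]
  ring

theorem hasDerivAt_streamFunction_comp (hρ : ContDiff ℝ 1 ρ) (hj : ContDiff ℝ 1 j)
    (hcont : ∀ p : ℝ × ℝ, fderiv ℝ ρ p (1, 0) + fderiv ℝ j p (0, 1) = 0)
    {x : ℝ → ℝ} {v t : ℝ} (hx : HasDerivAt x v t) :
    HasDerivAt (fun t => streamFunction ρ j (t, x t)) (ρ (t, x t) * v - j (t, x t)) t := by
  have hψ := hasStrictFDerivAt_uncurry_coprod (u := (t, x t))
    (f := fun t y => streamFunction ρ j (t, y))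
    (f₁ := fun t y => (1 : ℝ →L[ℝ] ℝ).smulRight (-j (t, y)))
    (f₂ := fun t y => (1 : ℝ →L[ℝ] ℝ).smulRight (ρ (t, y)))
    (.of_forall fun p => (hasDerivAt_streamFunction_fst hρ hj hcont p.1 p.2).hasFDerivAt)
    (.of_forall fun p => (hasDerivAt_streamFunction_snd hρ.continuous p.1 p.2).hasFDerivAt)
    (ContinuousLinearMap.toSpanSingletonCLE.continuous.comp hj.continuous.neg).continuousAt
    (ContinuousLinearMap.toSpanSingletonCLE.continuous.comp hρ.continuous).continuousAt
  refine (hψ.hasFDerivAt.comp_hasDerivAt t ((hasDerivAt_id t).prodMk hx)).congr_deriv ?_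
  simp [Function.HasUncurry.uncurry]
  ring

theorem integral_density_eq_integral_current (hρ : ContDiff ℝ 1 ρ) (hj : ContDiff ℝ 1 j)
    (hρpos : ∀ p, 0 < ρ p)
    (hcont : ∀ p : ℝ × ℝ, fderiv ℝ ρ p (1, 0) + fderiv ℝ j p (0, 1) = 0)
    {x : ℝ → ℝ} (hx : ∀ t, HasDerivAt x (j (t, x t) / ρ (t, x t)) t) (s : ℝ) :
    ∫ ξ in x 0..x s, ρ (0, ξ) = ∫ u in (0:ℝ)..s, j (u, x s) := by
  have hconst : streamFunction ρ j (s, x s) = streamFunction ρ j (0, x 0) := by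
    refine is_const_of_deriv_eq_zero (f := fun t => streamFunction ρ j (t, x t))
      (fun t => (hasDerivAt_streamFunction_comp hρ hj hcont (hx t)).differentiableAt)
      (fun t => ?_) s 0
    rw [(hasDerivAt_streamFunction_comp hρ hj hcont (hx t)).deriv,
      mul_div_cancel₀ _ (hρpos _).ne', sub_self]
  rw [integral_eq_sub_of_hasDerivAt (fun y _ => hasDerivAt_streamFunction_snd hρ.continuous 0 y)
      ((hρ.continuous.comp (Continuous.prodMk_right 0)).intervalIntegrable _ _),
    integral_eq_sub_of_hasDerivAt (f := fun t => -streamFunction ρ j (t, x s))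
      (fun t _ => (hasDerivAt_streamFunction_fst hρ hj hcont t (x s)).neg.congr_deriv (neg_neg _))
      ((hj.continuous.comp (Continuous.prodMk_left (x s))).intervalIntegrable _ _)]
  linarith

end StreamFunction

structure IsSpaceTimeFlow (F : ℝ → ℝ × ℝ → ℝ × ℝ) (V : ℝ × ℝ → ℝ) : Prop where
  map_zero : ∀ p, F 0 p = p
  map_add : ∀ r s p, F r (F s p) = F (r + s) p
  hasDerivAt : ∀ p s, HasDerivAt (fun τ => F τ p) ((1 : ℝ), V (F s p)) s

def trajectory (F : ℝ → ℝ × ℝ → ℝ × ℝ) (ξ t : ℝ) : ℝ := (F t (0, ξ)).2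

def footpoint (F : ℝ → ℝ × ℝ → ℝ × ℝ) (p : ℝ × ℝ) : ℝ := (F (-p.1) p).2

namespace IsSpaceTimeFlow

variable {F : ℝ → ℝ × ℝ → ℝ × ℝ} {V : ℝ × ℝ → ℝ}

theorem fst_apply (hF : IsSpaceTimeFlow F V) (r : ℝ) (p : ℝ × ℝ) : (F r p).1 = p.1 + r := by
  have hderiv (s : ℝ) : HasDerivAt (fun r => (F r p).1 - r) 0 s := by
    have h : HasDerivAt (fun r => (F r p).1) 1 s :=
      (ContinuousLinearMap.fst ℝ ℝ ℝ).hasFDerivAt.comp_hasDerivAt s (hF.hasDerivAt p s)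
    exact (h.sub (hasDerivAt_id s)).congr_deriv (sub_self 1)
  have := is_const_of_deriv_eq_zero (fun s => (hderiv s).differentiableAt)
    (fun s => (hderiv s).deriv) r 0
  simp only [hF.map_zero, sub_zero] at this
  linarith

theorem apply_zero_mk (hF : IsSpaceTimeFlow F V) (ξ t : ℝ) :
    F t (0, ξ) = (t, trajectory F ξ t) :=
  Prod.ext (by simp [hF.fst_apply]) rfl

theorem trajectory_zero (hF : IsSpaceTimeFlow F V) (ξ : ℝ) : trajectory F ξ 0 = ξ := by
  simp [trajectory, hF.map_zero]

theorem hasDerivAt_trajectory (hF : IsSpaceTimeFlow F V) (ξ t : ℝ) :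
    HasDerivAt (trajectory F ξ) (V (t, trajectory F ξ t)) t := by
  have h := (ContinuousLinearMap.snd ℝ ℝ ℝ).hasFDerivAt.comp_hasDerivAt t (hF.hasDerivAt (0, ξ) t)
  rwa [hF.apply_zero_mk] at h

theorem continuous_trajectory (hF : IsSpaceTimeFlow F V) (ξ : ℝ) :
    Continuous (trajectory F ξ) :=
  continuous_iff_continuousAt.2 fun t => (hF.hasDerivAt_trajectory ξ t).continuousAt

theorem apply_neg_fst (hF : IsSpaceTimeFlow F V) (p : ℝ × ℝ) :
    F (-p.1) p = (0, footpoint F p) :=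
  Prod.ext (by simp [hF.fst_apply]) rfl

theorem footpoint_eq_iff (hF : IsSpaceTimeFlow F V) {t x ξ : ℝ} :
    footpoint F (t, x) = ξ ↔ trajectory F ξ t = x := by
  constructor
  · rintro rfl
    rw [trajectory, ← hF.apply_neg_fst, hF.map_add, add_neg_cancel, hF.map_zero]
  · intro h
    have : F (-t) (t, x) = (0, ξ) := by
      rw [← h, ← hF.apply_zero_mk, hF.map_add, neg_add_cancel, hF.map_zero]
    simp [footpoint, this]

theorem footpoint_zero (hF : IsSpaceTimeFlow F V) (x : ℝ) : footpoint F (0, x) = x :=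
  hF.footpoint_eq_iff.2 (hF.trajectory_zero x)

theorem trajectory_footpoint (hF : IsSpaceTimeFlow F V) (t x : ℝ) :
    trajectory F (footpoint F (t, x)) t = x :=
  hF.footpoint_eq_iff.1 rfl

theorem trajectory_injective (hF : IsSpaceTimeFlow F V) (t : ℝ) :
    Function.Injective (trajectory F · t) := by
  intro ξ₁ ξ₂ h
  rw [← hF.footpoint_eq_iff.2 (rfl : trajectory F ξ₁ t = _),
    ← hF.footpoint_eq_iff.2 (rfl : trajectory F ξ₂ t = _)]
  exact congrArg (fun x => footpoint F (t, x)) h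

theorem strictMono_trajectory (hF : IsSpaceTimeFlow F V) (t : ℝ) :
    StrictMono (trajectory F · t) := by
  intro ξ₁ ξ₂ hlt
  by_contra! hle
  have hsign : (0 : ℝ) ∈ uIcc (trajectory F ξ₂ 0 - trajectory F ξ₁ 0)
      (trajectory F ξ₂ t - trajectory F ξ₁ t) := by
    rw [hF.trajectory_zero, hF.trajectory_zero]
    exact Icc_subset_uIcc' ⟨sub_nonpos.2 hle, sub_nonneg.2 hlt.le⟩
  obtain ⟨u, -, hu⟩ := intermediate_value_uIcc
    ((hF.continuous_trajectory ξ₂).sub (hF.continuous_trajectory ξ₁)).continuousOn hsign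
  exact hlt.ne' (hF.trajectory_injective u (sub_eq_zero.1 hu))

theorem monotone_footpoint (hF : IsSpaceTimeFlow F V) (t : ℝ) :
    Monotone fun x => footpoint F (t, x) := fun x₁ x₂ h =>
  (hF.strictMono_trajectory t).le_iff_le.1 (by simpa only [hF.trajectory_footpoint] using h)

theorem exists_trajectory_eq (hF : IsSpaceTimeFlow F V) {ξ c s : ℝ} (hs : 0 ≤ s)
    (hc : c ∈ uIcc ξ (trajectory F ξ s)) : ∃ t ∈ Icc 0 s, trajectory F ξ t = c := by
  rw [← uIcc_of_le hs]
  refine intermediate_value_uIcc (hF.continuous_trajectory ξ).continuousOn ?_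
  rwa [hF.trajectory_zero]

theorem image_footpoint_eq_Icc (hF : IsSpaceTimeFlow F V) {a b τ s₁ s₂ : ℝ} (hab : a ≤ b)
    (hs₁ : s₁ ∈ Icc 0 τ) (hs₂ : s₂ ∈ Icc 0 τ)
    (hmin : IsMinOn (fun s => footpoint F (s, a)) (Icc 0 τ) s₁)
    (hmax : IsMaxOn (fun s => footpoint F (s, b)) (Icc 0 τ) s₂) :
    footpoint F '' {p : ℝ × ℝ | a ≤ p.2 ∧ p.2 ≤ b ∧ 0 ≤ p.1 ∧ p.1 ≤ τ} =
      Icc (footpoint F (s₁, a)) (footpoint F (s₂, b)) := by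
  refine Subset.antisymm ?_ fun ξ ⟨hmξ, hξM⟩ => ?_
  · rintro _ ⟨⟨t, x⟩, ⟨hax, hxb, ht₀, htτ⟩, rfl⟩
    exact ⟨(hmin ⟨ht₀, htτ⟩).trans (hF.monotone_footpoint t hax),
      (hF.monotone_footpoint t hxb).trans (hmax ⟨ht₀, htτ⟩)⟩
  suffices ∃ t ∈ Icc 0 τ, trajectory F ξ t ∈ Icc a b by
    obtain ⟨t, ⟨ht₀, htτ⟩, hx⟩ := this
    exact ⟨(t, trajectory F ξ t), ⟨hx.1, hx.2, ht₀, htτ⟩, hF.footpoint_eq_iff.2 rfl⟩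
  have ha : a ≤ trajectory F ξ s₁ := by
    simpa only [hF.trajectory_footpoint] using (hF.strictMono_trajectory s₁).monotone hmξ
  have hb : trajectory F ξ s₂ ≤ b := by
    simpa only [hF.trajectory_footpoint] using (hF.strictMono_trajectory s₂).monotone hξM
  rcases lt_or_ge ξ a with hξa | haξ
  · obtain ⟨t, ht, hta⟩ := hF.exists_trajectory_eq hs₁.1 (Icc_subset_uIcc ⟨hξa.le, ha⟩)
    exact ⟨t, ⟨ht.1, ht.2.trans hs₁.2⟩, by rw [hta]; exact ⟨le_rfl, hab⟩⟩
  rcases le_or_gt ξ b with hξb | hbξ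
  · exact ⟨0, ⟨le_rfl, hs₁.1.trans hs₁.2⟩, by rw [hF.trajectory_zero]; exact ⟨haξ, hξb⟩⟩
  · obtain ⟨t, ht, htb⟩ := hF.exists_trajectory_eq hs₂.1 (Icc_subset_uIcc' ⟨hb, hbξ.le⟩)
    exact ⟨t, ⟨ht.1, ht.2.trans hs₂.2⟩, by rw [htb]; exact ⟨hab, le_rfl⟩⟩

theorem integral_current_eq_integral_footpoint {ρ j : ℝ × ℝ → ℝ} (hρ : ContDiff ℝ 1 ρ)
    (hj : ContDiff ℝ 1 j) (hρpos : ∀ p, 0 < ρ p)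
    (hcont : ∀ p : ℝ × ℝ, fderiv ℝ ρ p (1, 0) + fderiv ℝ j p (0, 1) = 0)
    (hF : IsSpaceTimeFlow F fun p => j p / ρ p) (c s : ℝ) :
    ∫ t in (0:ℝ)..s, j (t, c) = ∫ ξ in footpoint F (s, c)..c, ρ (0, ξ) := by
  have := integral_density_eq_integral_current hρ hj hρpos hcont
    (hF.hasDerivAt_trajectory (footpoint F (s, c))) s
  rwa [hF.trajectory_zero, hF.trajectory_footpoint, eq_comm] at this

theorem isMinOn_footpoint_iff {ρ j : ℝ × ℝ → ℝ} (hρ : ContDiff ℝ 1 ρ) (hj : ContDiff ℝ 1 j)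
    (hρpos : ∀ p, 0 < ρ p)
    (hcont : ∀ p : ℝ × ℝ, fderiv ℝ ρ p (1, 0) + fderiv ℝ j p (0, 1) = 0)
    (hF : IsSpaceTimeFlow F fun p => j p / ρ p) {c s₀ : ℝ} {S : Set ℝ} :
    IsMinOn (fun s => footpoint F (s, c)) S s₀ ↔
      IsMaxOn (fun s => ∫ t in (0:ℝ)..s, j (t, c)) S s₀ := by
  have hanti : StrictAnti fun x => ∫ ξ in x..c, ρ (0, ξ) := strictAnti_intervalIntegral_left
    (hρ.continuous.comp (Continuous.prodMk_right 0)) (fun ξ => hρpos (0, ξ)) c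
  simp only [isMinOn_iff, isMaxOn_iff, hF.integral_current_eq_integral_footpoint hρ hj hρpos hcont]
  exact forall₂_congr fun _ _ => hanti.le_iff_ge.symm

theorem isMaxOn_footpoint_iff {ρ j : ℝ × ℝ → ℝ} (hρ : ContDiff ℝ 1 ρ) (hj : ContDiff ℝ 1 j)
    (hρpos : ∀ p, 0 < ρ p)
    (hcont : ∀ p : ℝ × ℝ, fderiv ℝ ρ p (1, 0) + fderiv ℝ j p (0, 1) = 0)
    (hF : IsSpaceTimeFlow F fun p => j p / ρ p) {c s₀ : ℝ} {S : Set ℝ} :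
    IsMaxOn (fun s => footpoint F (s, c)) S s₀ ↔
      IsMaxOn (fun s => -∫ t in (0:ℝ)..s, j (t, c)) S s₀ := by
  have hanti : StrictAnti fun x => ∫ ξ in x..c, ρ (0, ξ) := strictAnti_intervalIntegral_left
    (hρ.continuous.comp (Continuous.prodMk_right 0)) (fun ξ => hρpos (0, ξ)) c
  simp only [isMaxOn_iff, hF.integral_current_eq_integral_footpoint hρ hj hρpos hcont,
    neg_le_neg_iff]
  exact forall₂_congr fun _ _ => hanti.le_iff_ge.symm

end IsSpaceTimeFlow

theorem extended_detector_formula_general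
    (ρ j : ℝ × ℝ → ℝ)
    (hρ : ContDiff ℝ 1 ρ) (hj : ContDiff ℝ 1 j)
    (hρpos : ∀ p, 0 < ρ p)
    (hcont : ∀ p : ℝ × ℝ, fderiv ℝ ρ p (1, 0) + fderiv ℝ j p (0, 1) = 0)
    (F : ℝ → ℝ × ℝ → ℝ × ℝ)
    (hF0 : ∀ p, F 0 p = p)
    (hFgroup : ∀ r s p, F r (F s p) = F (r + s) p)
    (hFode : ∀ (p : ℝ × ℝ) (s : ℝ),
      HasDerivAt (fun τ => F τ p) ((1 : ℝ), j (F s p) / ρ (F s p)) s)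
    (𝒳₀ : ℝ × ℝ → ℝ)
    (h𝒳₀ : ∀ p : ℝ × ℝ, 𝒳₀ p = (F (-p.1) p).2)
    (a b : ℝ) (hab : a < b)
    (fa fb : ℝ → ℝ)
    (hfa : ∀ s, fa s = ∫ t in (0:ℝ)..s, j (t, a))
    (hfb : ∀ s, fb s = ∫ t in (0:ℝ)..s, j (t, b)) :
    ∀ τ : ℝ, 0 ≤ τ →
      (∫ ξ in
        (𝒳₀ '' {p : ℝ × ℝ | a ≤ p.2 ∧ p.2 ≤ b ∧ 0 ≤ p.1 ∧ p.1 ≤ τ}),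
          ρ (0, ξ)) =
        (∫ ξ in a..b, ρ (0, ξ))
          + sSup (fa '' Icc 0 τ) + sSup ((fun s => -fb s) '' Icc 0 τ) := by
  intro τ hτ
  obtain rfl : 𝒳₀ = footpoint F := funext h𝒳₀
  obtain rfl : fa = fun s => ∫ t in (0:ℝ)..s, j (t, a) := funext hfa
  obtain rfl : fb = fun s => ∫ t in (0:ℝ)..s, j (t, b) := funext hfb
  beta_reduce
  have hF : IsSpaceTimeFlow F (fun p => j p / ρ p) := ⟨hF0, hFgroup, hFode⟩
  have hcurrent (c : ℝ) : Continuous fun s => ∫ t in (0:ℝ)..s, j (t, c) :=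
    continuous_primitive
      (fun _ _ => (hj.continuous.comp (Continuous.prodMk_left c)).intervalIntegrable _ _) 0
  obtain ⟨s₁, hs₁, hmax₁⟩ := isCompact_Icc.exists_isMaxOn (nonempty_Icc.2 hτ)
    (hcurrent a).continuousOn
  obtain ⟨s₂, hs₂, hmax₂⟩ := isCompact_Icc.exists_isMaxOn (nonempty_Icc.2 hτ)
    (f := fun s => -∫ t in (0:ℝ)..s, j (t, b)) (hcurrent b).neg.continuousOn
  have hmin_a := (hF.isMinOn_footpoint_iff hρ hj hρpos hcont).2 hmax₁
  have hmax_b := (hF.isMaxOn_footpoint_iff hρ hj hρpos hcont).2 hmax₂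
  have ha : footpoint F (s₁, a) ≤ a := by
    simpa only [hF.footpoint_zero] using isMinOn_iff.1 hmin_a 0 ⟨le_rfl, hτ⟩
  have hb : b ≤ footpoint F (s₂, b) := by
    simpa only [hF.footpoint_zero] using isMaxOn_iff.1 hmax_b 0 ⟨le_rfl, hτ⟩
  have hρ₀ : Continuous fun ξ => ρ (0, ξ) := hρ.continuous.comp (Continuous.prodMk_right 0)
  rw [hF.image_footpoint_eq_Icc hab.le hs₁ hs₂ hmin_a hmax_b, hmax₁.csSup_image_eq hs₁,
    hmax₂.csSup_image_eq hs₂, hF.integral_current_eq_integral_footpoint hρ hj hρpos hcont,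
    hF.integral_current_eq_integral_footpoint hρ hj hρpos hcont, integral_Icc_eq_integral_Ioc,
    ← integral_of_le (ha.trans (hab.le.trans hb)),
    ← integral_add_adjacent_intervals (hρ₀.intervalIntegrable _ a) (hρ₀.intervalIntegrable a _),
    ← integral_add_adjacent_intervals (hρ₀.intervalIntegrable a b) (hρ₀.intervalIntegrable b _),
    integral_symm b (footpoint F (s₂, b))]
  ring

/-- main proposition, extended detector: for a < b,
D = {(t,x) : x ∈ [a,b], t ≥ 0}, D_τ = {p ∈ D : t(p) ≤ τ},
f_a(s) = ∫_0^s j(t,a) dt and f_b(s) = ∫_0^s j(t,b) dt, the detection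
probability satisfies
P(τ) = P(0) + max{f_a(s) : 0 ≤ s ≤ τ} + max{−f_b(s) : 0 ≤ s ≤ τ},
where P(0) = ∫_a^b ρ(0,ξ) dξ. -/
theorem extended_detector_formula
    (ρ j : ℝ × ℝ → ℝ)
    (hρ : ContDiff ℝ 1 ρ) (hj : ContDiff ℝ 1 j)
    (hρpos : ∀ p, 0 < ρ p)
    (hcont : ∀ p : ℝ × ℝ, fderiv ℝ ρ p (1, 0) + fderiv ℝ j p (0, 1) = 0)
    (F : ℝ → ℝ × ℝ → ℝ × ℝ)
    (hF0 : ∀ p, F 0 p = p)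
    (hFgroup : ∀ r s p, F r (F s p) = F (r + s) p)
    (hFode : ∀ (p : ℝ × ℝ) (s : ℝ),
      HasDerivAt (fun τ => F τ p) ((1 : ℝ), j (F s p) / ρ (F s p)) s)
    (𝒳₀ : ℝ × ℝ → ℝ)
    (h𝒳₀ : ∀ p : ℝ × ℝ, 𝒳₀ p = (F (-p.1) p).2)
    (hint : Integrable (fun ξ => ρ (0, ξ)))
    (hnorm : (∫ ξ : ℝ, ρ (0, ξ)) = 1)
    (a b : ℝ) (hab : a < b)
    (fa fb : ℝ → ℝ)
    (hfa : ∀ s, fa s = ∫ t in (0:ℝ)..s, j (t, a))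
    (hfb : ∀ s, fb s = ∫ t in (0:ℝ)..s, j (t, b)) :
    ∀ τ : ℝ, 0 ≤ τ →
      (∫ ξ in
        (𝒳₀ '' {p : ℝ × ℝ | a ≤ p.2 ∧ p.2 ≤ b ∧ 0 ≤ p.1 ∧ p.1 ≤ τ}),
          ρ (0, ξ)) =
        (∫ ξ in a..b, ρ (0, ξ))
          + sSup (fa '' Icc 0 τ) + sSup ((fun s => -fb s) '' Icc 0 τ) :=
  extended_detector_formula_general ρ j hρ hj hρpos hcont F hF0 hFgroup hFode 𝒳₀ h𝒳₀ a b hab fa fb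
    hfa hfb
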